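/- Let n ≥ 1 and let (A_n, 𝒜_n) be the connectivity space with A_n = {1, …, n} and 𝒜_n = {{1}, {2}, …, {n}} ∪ {{1,2}, {1,2,3}, …, {1,2,…,n}}. Then every connected subset of (A_n, 𝒜_n) is irreducible. -/
import Mathlib


variable {X : Type*}

def IsConnStructure (C : Set (Set X)) : Prop :=
  (∀ S ∈ C, S.Nonempty) ∧
  ∀ I : Set (Set X), I ⊆ C → (⋂₀ I).Nonempty → ⋃₀ I ∈ C

def ConnIntegral (C : Set (Set X)) : Prop := ∀ x : X, {x} ∈ C

def IsReducible (C : Set (Set X)) (K : Set X) : Prop :=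
  ∃ A B : Set X, A ∈ C ∧ B ∈ C ∧ A ⊂ K ∧ B ⊂ K ∧ K = A ∪ B ∧ (A ∩ B).Nonempty

def IsIrred (C : Set (Set X)) (K : Set X) : Prop := K ∈ C ∧ ¬ IsReducible C K

open Classical in
noncomputable def ord [Fintype X] (C : Set (Set X)) (L : Set X) : ℕ :=
  if L.Subsingleton then 0
  else 1 + sSup (Set.range fun K : {K : Set X // IsIrred C K ∧ K ⊂ L} => ord C K.1)
termination_by L.toFinset.card
decreasing_by
  exact Finset.card_lt_card (Set.toFinset_ssubset_toFinset.2 K.2.2)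

noncomputable def spaceOrd [Fintype X] (C : Set (Set X)) : ℕ :=
  sSup (Set.range fun K : {K : Set X // IsIrred C K} => ord C K.1)

/-- The connectivity structure `𝒜ₙ` on `{1, …, n}` (modelled by `Fin n`)
consisting of all singletons together with all initial segments. -/
def segSpace (n : ℕ) : Set (Set (Fin n)) :=
  (Set.range fun i : Fin n => ({i} : Set (Fin n))) ∪
    (Set.range fun k : Fin n => Set.Iic k)

/-- In the space `(Aₙ, 𝒜ₙ)`, every connected subset is irreducible. -/
theorem segSpace_irred (n : ℕ) (hn : 1 ≤ n) :
    ∀ K ∈ segSpace n, IsIrred (segSpace n) K := by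
  have aux : ∀ S ∈ segSpace n, ∀ k : Fin n, k ∈ S → S ⊂ Set.Iic k → S = {k} := by
    rintro S (⟨i, rfl⟩ | ⟨j, rfl⟩) k hk hS
    · simp only [Set.mem_singleton_iff] at hk; rw [hk]
    · exact absurd (fun x hx => le_trans (Set.mem_Iic.1 hx) hk) hS.2
  intro K hK
  refine ⟨hK, ?_⟩
  rintro ⟨A, B, hA, hB, hAK, hBK, hK', ⟨x, hxA, hxB⟩⟩
  rcases hK with ⟨i, rfl⟩ | ⟨k, rfl⟩
  · -- K = {i} : A is a nonempty proper subset, impossible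
    have hAne : A.Nonempty := by
      rcases hA with ⟨j, rfl⟩ | ⟨j, rfl⟩
      · exact ⟨j, rfl⟩
      · exact ⟨j, le_refl j⟩
    obtain ⟨a, ha⟩ := hAne
    have : ({i} : Set (Fin n)) ⊆ A := by
      have := hAK.1 ha
      simp only [Set.mem_singleton_iff] at this
      subst this
      intro y hy; simp only [Set.mem_singleton_iff] at hy; subst hy; exact ha
    exact hAK.2 this
  · -- K = Iic k
    change A ⊂ Set.Iic k at hAK
    change B ⊂ Set.Iic k at hBK
    change Set.Iic k = A ∪ B at hK'
    have hk : k ∈ A ∪ B := by rw [← hK']; exact Set.mem_Iic.2 (le_refl k)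
    rcases hk with hkA | hkB
    · have hA1 : A = {k} := aux A hA k hkA hAK
      have hxk : x = k := by rw [hA1] at hxA; exact hxA
      have hB1 : B = {k} := aux B hB k (hxk ▸ hxB) hBK
      have : Set.Iic k = ({k} : Set (Fin n)) := by
        rw [hK', hA1, hB1, Set.union_self]
      rw [this, hA1] at hAK
      exact hAK.2 (le_refl _)
    · have hB1 : B = {k} := aux B hB k hkB hBK
      have hxk : x = k := by rw [hB1] at hxB; exact hxB
      have hA1 : A = {k} := aux A hA k (hxk ▸ hxA) hAK
      have : Set.Iic k = ({k} : Set (Fin n)) := by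
        rw [hK', hA1, hB1, Set.union_self]
      rw [this, hA1] at hAK
      exact hAK.2 (le_refl _)
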